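/- With Θ, E, P, D and f as in the formal Laurent series construction of f₃ (namely Θ = ∑_{n∈ℤ} X^{n²}, E = 1 − 264·∑_{n≥1} σ₉(n)X^{4n}, P = X⁴·∏_{n≥1}(1 − X^{4n})²⁴, D(∑aₙXⁿ) = ∑n·aₙXⁿ, and f = −(1/20)·(((1/2)·Θ·(DE) − 10·E·(DΘ))·P⁻¹ + 608·Θ)), the Laurent series F = 2·f + 248·Θ has coefficients of X⁻³, X⁰, X¹, X⁴, X⁵, X⁸, X⁹, X¹², X¹³, X¹⁶ equal respectively to 2, 248, 0, 54000, −171990, 3414528, −8192000, 88660992, −183902292, 1417878000, and its coefficient of Xⁿ vanishes for n < −3 and for −3 ≤ n ≤ 16 with n ≡ 2 or 3 (mod 4). -/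

import Mathlib

noncomputable section

/-- The product (coefficientwise) topology on `ℚ[[X]]`; since `ℚ` is discrete this
coincides with the `X`-adic topology. -/
instance : TopologicalSpace (PowerSeries ℚ) :=
  @Pi.topologicalSpace (Unit →₀ ℕ) (fun _ => ℚ) (fun _ => ⊥)

open PowerSeries

/-- `Θ = ∑_{n ∈ ℤ} X^{n²}`. -/
def Theta : PowerSeries ℚ := ∑' n : ℤ, (X : PowerSeries ℚ) ^ (n.natAbs ^ 2)

/-- `E = 1 - 264 ∑_{n ≥ 1} σ₉(n) X^{4n}`, where `σ₉(n)` is the sum of the 9th powers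
of the positive divisors of `n`. -/
def Eseries : PowerSeries ℚ :=
  1 - 264 * ∑' n : ℕ, ((∑ d ∈ (n + 1).divisors, d ^ 9 : ℕ) : ℚ) •
      (X : PowerSeries ℚ) ^ (4 * (n + 1))

/-- `P = X⁴ ∏_{n ≥ 1} (1 - X^{4n})²⁴`, the infinite product taken in the topology
above. -/
def Pseries : PowerSeries ℚ :=
  X ^ 4 * ∏' n : ℕ, (1 - (X : PowerSeries ℚ) ^ (4 * (n + 1))) ^ 24

/-- The ring embedding of `ℚ[[X]]` into the field of formal Laurent series `ℚ((X))`. -/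
def toLaurent : PowerSeries ℚ →+* LaurentSeries ℚ := HahnSeries.ofPowerSeries ℤ ℚ

/-- The derivation `D(∑ aₙ Xⁿ) = ∑ n aₙ Xⁿ` on Laurent series. -/
def Dop (f : LaurentSeries ℚ) : LaurentSeries ℚ :=
  ⟨fun n => (n : ℚ) * f.coeff n,
    f.isPWO_support.mono (by
      intro n hn
      simp only [Function.mem_support, ne_eq] at hn ⊢
      exact fun h => hn (by rw [h, mul_zero]))⟩

/-- The Laurent series
`f = -(1/20) (((1/2) Θ (DE) - 10 E (DΘ)) P⁻¹ + 608 Θ)`,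
i.e. Zagier's weight one-half form `f₃`, as a formal Laurent series. -/
def fThree : LaurentSeries ℚ :=
  -(1 / 20 : LaurentSeries ℚ) *
    (((1 / 2 : LaurentSeries ℚ) * toLaurent Theta * Dop (toLaurent Eseries) -
        10 * toLaurent Eseries * Dop (toLaurent Theta)) * (toLaurent Pseries)⁻¹ +
      608 * toLaurent Theta)

/-- `ℱ₃ = 2 f₃ + 248 Θ` as a formal Laurent series. -/
def Fcal : LaurentSeries ℚ := 2 * fThree + 248 * toLaurent Theta

/-!
Since `P = X⁴ Q` with `Q = ∏ (1 - X⁴ⁿ)²⁴` a unit of `ℚ[[X]]`, the series `20 X⁴ ℱ₃` is the power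
series `3744 X⁴ Θ - (Θ · DE - 20 E · DΘ) Q⁻¹`. The coefficients of `ℱ₃` up to `X¹⁶` are therefore
determined by `Θ`, `E` and `Q⁻¹` modulo `X²¹`. Modulo `X²¹` only finitely many terms of `Θ` and `E`
and finitely many factors of `Q` survive, so everything reduces to arithmetic with truncated
integer coefficient lists, which the kernel evaluates; `Q⁻¹` is certified by checking `Q Q⁻¹ ≡ 1`.
-/

open Filter Finset

section Truncation

variable {R : Type*} [CommRing R]

theorem smodEq_X_pow_iff {N : ℕ} {φ ψ : R⟦X⟧} :
    φ ≡ ψ [SMOD Ideal.span {(X : R⟦X⟧) ^ N}] ↔ ∀ d < N, coeff d φ = coeff d ψ := by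
  simp only [SModEq.sub_mem, Ideal.mem_span_singleton, X_pow_dvd_iff, map_sub, sub_eq_zero]

theorem coeff_X_mul_derivative (φ : R⟦X⟧) (n : ℕ) :
    coeff n (X * d⁄dX R φ) = n * coeff n φ := by
  cases n with
  | zero => simp
  | succ n => rw [coeff_succ_X_mul, coeff_derivative, mul_comm]; push_cast; rfl

theorem SModEq.X_mul_derivative {N : ℕ} {φ ψ : R⟦X⟧}
    (h : φ ≡ ψ [SMOD Ideal.span {(X : R⟦X⟧) ^ N}]) :
    X * d⁄dX R φ ≡ X * d⁄dX R ψ [SMOD Ideal.span {(X : R⟦X⟧) ^ N}] := by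
  rw [smodEq_X_pow_iff] at h ⊢
  intro d hd
  rw [coeff_X_mul_derivative, coeff_X_mul_derivative, h d hd]

theorem X_pow_dvd_one_sub_X_pow_pow_sub_one (m k : ℕ) :
    (X : R⟦X⟧) ^ m ∣ (1 - X ^ m) ^ k - 1 := by
  have := sub_dvd_pow_sub_pow (1 - X ^ m : R⟦X⟧) 1 k
  rwa [one_pow, sub_sub_cancel_left, neg_dvd] at this

end Truncation

theorem inv_smodEq_of_mul_smodEq_one {k : Type*} [Field k] {I : Ideal k⟦X⟧} {φ ψ : k⟦X⟧}
    (hφ : constantCoeff φ ≠ 0) (h : φ * ψ ≡ 1 [SMOD I]) : φ⁻¹ ≡ ψ [SMOD I] := by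
  have := (SModEq.refl φ⁻¹).mul h
  rwa [← mul_assoc, PowerSeries.inv_mul_cancel _ hφ, one_mul, mul_one, SModEq.comm] at this

namespace CoeffList

def add : List ℤ → List ℤ → List ℤ
  | [], b => b
  | a, [] => a
  | x :: a, y :: b => (x + y) :: add a b

def mul : List ℤ → List ℤ → List ℤ
  | [], _ => []
  | x :: a, b => add (b.map (x * ·)) (0 :: mul a b)

def truncMul (N : ℕ) (a b : List ℤ) : List ℤ := (mul a b).take N

def truncProd (N : ℕ) (l : ℕ → List ℤ) : ℕ → List ℤ
  | 0 => [1]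
  | k + 1 => truncMul N (truncProd N l k) (l k)

def oneSubXPow (m : ℕ) : List ℤ := 1 :: (List.replicate (m - 1) 0 ++ [-1])

def euler (l : List ℤ) : List ℤ := l.mapIdx fun n a => n * a

variable {R : Type*} [CommRing R]

def toPowerSeries (l : List ℤ) : R⟦X⟧ := mk fun n => (l.getD n 0 : R)

theorem coeff_toPowerSeries (l : List ℤ) (n : ℕ) :
    coeff n (toPowerSeries l : R⟦X⟧) = l.getD n 0 :=
  coeff_mk _ _

@[simp] theorem toPowerSeries_nil : (toPowerSeries [] : R⟦X⟧) = 0 := by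
  ext n
  simp [coeff_toPowerSeries]

theorem toPowerSeries_cons (a : ℤ) (l : List ℤ) :
    (toPowerSeries (a :: l) : R⟦X⟧) = (a : R⟦X⟧) + X * toPowerSeries l := by
  ext n
  rw [← map_intCast (C : R →+* R⟦X⟧), map_add, coeff_C]
  cases n with
  | zero => simp [coeff_toPowerSeries]
  | succ n => simp [coeff_toPowerSeries, coeff_succ_X_mul]

theorem toPowerSeries_add (a b : List ℤ) :
    (toPowerSeries (add a b) : R⟦X⟧) = toPowerSeries a + toPowerSeries b := by
  induction a, b using add.induct with
  | case1 b => simp [add]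
  | case2 a h => cases a <;> simp_all [add]
  | case3 x a y b ih => simp only [add, toPowerSeries_cons, ih]; push_cast; ring

theorem toPowerSeries_map_mul (x : ℤ) (l : List ℤ) :
    (toPowerSeries (l.map (x * ·)) : R⟦X⟧) = (x : R⟦X⟧) * toPowerSeries l := by
  induction l with
  | nil => simp
  | cons y l ih => simp only [List.map_cons, toPowerSeries_cons, ih]; push_cast; ring

theorem toPowerSeries_mul (a b : List ℤ) :
    (toPowerSeries (mul a b) : R⟦X⟧) = toPowerSeries a * toPowerSeries b := by
  induction a with
  | nil => simp [mul]
  | cons x a ih =>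
    rw [mul, toPowerSeries_add, toPowerSeries_map_mul, toPowerSeries_cons, toPowerSeries_cons,
      ih, Int.cast_zero, zero_add]
    ring

theorem toPowerSeries_replicate_zero_append (k : ℕ) (l : List ℤ) :
    (toPowerSeries (List.replicate k 0 ++ l) : R⟦X⟧) = X ^ k * toPowerSeries l := by
  induction k with
  | zero => simp
  | succ k ih =>
    rw [List.replicate_succ, List.cons_append, toPowerSeries_cons, ih, Int.cast_zero, zero_add]
    ring

theorem toPowerSeries_oneSubXPow {m : ℕ} (hm : 0 < m) :
    (toPowerSeries (oneSubXPow m) : R⟦X⟧) = 1 - X ^ m := by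
  obtain ⟨k, rfl⟩ := Nat.exists_eq_add_of_lt hm
  rw [oneSubXPow, toPowerSeries_cons, toPowerSeries_replicate_zero_append, toPowerSeries_cons,
    toPowerSeries_nil]
  push_cast
  ring_nf

theorem X_mul_derivative_toPowerSeries (l : List ℤ) :
    X * d⁄dX R (toPowerSeries l) = toPowerSeries (euler l) := by
  ext n
  rw [coeff_X_mul_derivative, coeff_toPowerSeries, coeff_toPowerSeries, euler,
    List.getD_eq_getElem?_getD, List.getD_eq_getElem?_getD, List.getElem?_mapIdx]
  cases l[n]? <;> simp

theorem smodEq_toPowerSeries_iff {N : ℕ} {φ : R⟦X⟧} {l : List ℤ} :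
    φ ≡ toPowerSeries l [SMOD Ideal.span {(X : R⟦X⟧) ^ N}] ↔ ∀ d < N, coeff d φ = l.getD d 0 := by
  simp only [smodEq_X_pow_iff, coeff_toPowerSeries]

theorem toPowerSeries_take_smodEq (N : ℕ) (l : List ℤ) :
    (toPowerSeries (l.take N) : R⟦X⟧) ≡ toPowerSeries l [SMOD Ideal.span {(X : R⟦X⟧) ^ N}] := by
  rw [smodEq_X_pow_iff]
  intro d hd
  simp [coeff_toPowerSeries, List.getD_eq_getElem?_getD, hd]

theorem toPowerSeries_truncMul_smodEq (N : ℕ) (a b : List ℤ) :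
    (toPowerSeries (truncMul N a b) : R⟦X⟧) ≡ toPowerSeries a * toPowerSeries b
      [SMOD Ideal.span {(X : R⟦X⟧) ^ N}] := by
  rw [← toPowerSeries_mul]
  exact toPowerSeries_take_smodEq N _

theorem prod_range_toPowerSeries_smodEq (N : ℕ) (l : ℕ → List ℤ) (k : ℕ) :
    ∏ i ∈ range k, (toPowerSeries (l i) : R⟦X⟧) ≡ toPowerSeries (truncProd N l k)
      [SMOD Ideal.span {(X : R⟦X⟧) ^ N}] := by
  induction k with
  | zero => simp [truncProd, toPowerSeries_cons]
  | succ k ih =>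
    rw [prod_range_succ, truncProd]
    exact (ih.mul SModEq.rfl).trans (toPowerSeries_truncMul_smodEq N _ _).symm

end CoeffList

open CoeffList

section DiscreteCoefficients

theorem isClosed_setOf_smodEq (N : ℕ) (ψ : ℚ⟦X⟧) :
    IsClosed {φ : ℚ⟦X⟧ | φ ≡ ψ [SMOD Ideal.span {(X : ℚ⟦X⟧) ^ N}]} := by
  let _ : TopologicalSpace ℚ := ⊥
  have : DiscreteTopology ℚ := ⟨rfl⟩
  simp only [smodEq_X_pow_iff, Set.ofPred_forall]
  exact isClosed_iInter fun d => isClosed_iInter fun _ =>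
    (isClosed_discrete {coeff d ψ}).preimage (PowerSeries.WithPiTopology.continuous_coeff ℚ d)

theorem summable_of_eventually_coeff_eq_zero {ι : Type*} {f : ι → ℚ⟦X⟧}
    (h : ∀ d, ∀ᶠ i in cofinite, coeff d (f i) = 0) : Summable f := by
  let _ : TopologicalSpace ℚ := ⊥
  exact (PowerSeries.WithPiTopology.summable_iff_summable_coeff ℚ).2 fun d =>
    summable_of_hasFiniteSupport (h d)

theorem multipliable_of_X_pow_dvd {f : ℕ → ℚ⟦X⟧} {m : ℕ → ℕ} (hm : Tendsto m atTop atTop)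
    (h : ∀ n, X ^ m n ∣ f n - 1) : Multipliable f := by
  let _ : TopologicalSpace ℚ := ⊥
  have horder : Tendsto (fun n => (f n - 1).order) atTop (nhds ⊤) := by
    refine ENat.tendsto_nhds_top_iff_natCast_lt.2 fun k => ?_
    filter_upwards [tendsto_atTop.1 hm (k + 1)] with n hn
    exact (ENat.natCast_lt_natCast.2 (Nat.lt_of_succ_le hn)).trans_le
      (nat_le_order _ _ (X_pow_dvd_iff.1 (h n)))
  have := PowerSeries.WithPiTopology.multipliable_one_add_of_tendsto_order_atTop_nhds_top ℚ horder
  simp only [add_sub_cancel] at this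
  exact this

theorem tsum_smodEq_sum {ι : Type*} {f : ι → ℚ⟦X⟧} (hf : Summable f) {N : ℕ} {s : Finset ι}
    (hs : ∀ i ∉ s, f i ≡ 0 [SMOD Ideal.span {(X : ℚ⟦X⟧) ^ N}]) :
    ∑' i, f i ≡ ∑ i ∈ s, f i [SMOD Ideal.span {(X : ℚ⟦X⟧) ^ N}] := by
  refine (isClosed_setOf_smodEq N _).mem_of_tendsto hf.hasSum
    (eventually_atTop.2 ⟨s, fun t hst => ?_⟩)
  classical
  have htail : ∑ i ∈ t \ s, f i ≡ 0 [SMOD Ideal.span {(X : ℚ⟦X⟧) ^ N}] := by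
    simpa using SModEq.sum fun i hi => hs i (mem_sdiff.1 hi).2
  simpa [sum_sdiff hst] using htail.add (SModEq.refl (∑ i ∈ s, f i))

theorem tprod_smodEq_prod {ι : Type*} {f : ι → ℚ⟦X⟧} (hf : Multipliable f) {N : ℕ}
    {s : Finset ι} (hs : ∀ i ∉ s, f i ≡ 1 [SMOD Ideal.span {(X : ℚ⟦X⟧) ^ N}]) :
    ∏' i, f i ≡ ∏ i ∈ s, f i [SMOD Ideal.span {(X : ℚ⟦X⟧) ^ N}] := by
  refine (isClosed_setOf_smodEq N _).mem_of_tendsto hf.hasProd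
    (eventually_atTop.2 ⟨s, fun t hst => ?_⟩)
  classical
  have htail : ∏ i ∈ t \ s, f i ≡ 1 [SMOD Ideal.span {(X : ℚ⟦X⟧) ^ N}] := by
    simpa using SModEq.prod fun i hi => hs i (mem_sdiff.1 hi).2
  simpa [prod_sdiff hst] using htail.mul (SModEq.refl (∏ i ∈ s, f i))

end DiscreteCoefficients

def thetaList : List ℤ := [1, 2, 0, 0, 2, 0, 0, 0, 0, 2, 0, 0, 0, 0, 0, 0, 2]

theorem Theta_smodEq : Theta ≡ toPowerSeries thetaList [SMOD Ideal.span {(X : ℚ⟦X⟧) ^ 21}] := by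
  have hsum : Summable fun n : ℤ => (X : ℚ⟦X⟧) ^ (n.natAbs ^ 2) := by
    refine summable_of_eventually_coeff_eq_zero fun d =>
      (Set.finite_Icc (-(d : ℤ)) d).subset fun n hn => ?_
    have hd : d = n.natAbs ^ 2 := by
      by_contra h
      exact hn (by simp [coeff_X_pow, h])
    have := Nat.le_self_pow two_ne_zero n.natAbs
    constructor <;> omega
  refine (tsum_smodEq_sum hsum (s := Ioo (-5) 5) fun n hn => ?_).trans ?_
  · rw [SModEq.zero, Ideal.mem_span_singleton]
    refine pow_dvd_pow _ ?_
    have : 5 ≤ n.natAbs := by simp only [mem_Ioo] at hn; omega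
    nlinarith
  · rw [smodEq_toPowerSeries_iff]
    intro d hd
    simp only [map_sum, coeff_X_pow]
    revert d
    decide +kernel

def eisensteinList : List ℤ :=
  [1, 0, 0, 0, -264, 0, 0, 0, -135432, 0, 0, 0, -5196576, 0, 0, 0, -69341448, 0, 0, 0, -515625264]

theorem Eseries_smodEq :
    Eseries ≡ toPowerSeries eisensteinList [SMOD Ideal.span {(X : ℚ⟦X⟧) ^ 21}] := by
  have hsum : Summable fun n : ℕ =>
      ((∑ d ∈ (n + 1).divisors, d ^ 9 : ℕ) : ℚ) • (X : ℚ⟦X⟧) ^ (4 * (n + 1)) := by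
    refine summable_of_eventually_coeff_eq_zero fun d =>
      (Set.finite_Iic d).subset fun n hn => ?_
    have hd : d = 4 * (n + 1) := by
      by_contra h
      exact hn (by simp [coeff_X_pow, h])
    simp only [Set.mem_Iic]
    omega
  have htail := tsum_smodEq_sum hsum (N := 21) (s := range 5) fun n hn => by
    rw [SModEq.zero, Ideal.mem_span_singleton, smul_eq_C_mul]
    simp only [mem_range] at hn
    exact (pow_dvd_pow _ (by omega)).mul_left _
  refine ((SModEq.refl 1).sub ((SModEq.refl 264).mul htail)).trans ?_
  rw [smodEq_toPowerSeries_iff]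
  intro d hd
  rw [← map_ofNat C 264]
  simp only [map_sub, coeff_one, coeff_C_mul, map_sum, coeff_smul, coeff_X_pow, smul_eq_mul]
  revert d
  decide +kernel

def Pprod : ℚ⟦X⟧ := ∏' n : ℕ, (1 - X ^ (4 * (n + 1))) ^ 24

def eulerProdList : List ℤ := truncProd 21 (fun n => oneSubXPow (4 * (n + 1))) 5

theorem eulerProd_smodEq :
    ∏ n ∈ range 5, ((1 : ℚ⟦X⟧) - X ^ (4 * (n + 1))) ≡ toPowerSeries eulerProdList
      [SMOD Ideal.span {(X : ℚ⟦X⟧) ^ 21}] := by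
  rw [eulerProdList, ← prod_congr rfl fun n _ => toPowerSeries_oneSubXPow (by omega)]
  exact prod_range_toPowerSeries_smodEq 21 _ 5

def PprodList : List ℤ := truncProd 21 (fun _ => eulerProdList) 24

theorem Pprod_smodEq : Pprod ≡ toPowerSeries PprodList [SMOD Ideal.span {(X : ℚ⟦X⟧) ^ 21}] := by
  have hmul : Multipliable fun n : ℕ => ((1 : ℚ⟦X⟧) - X ^ (4 * (n + 1))) ^ 24 :=
    multipliable_of_X_pow_dvd (tendsto_atTop_mono (fun n => show n ≤ 4 * (n + 1) by omega)
      tendsto_id) fun n => X_pow_dvd_one_sub_X_pow_pow_sub_one _ _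
  have hpow : toPowerSeries eulerProdList ^ 24 =
      ∏ _i ∈ range 24, (toPowerSeries eulerProdList : ℚ⟦X⟧) := by
    simp
  refine (tprod_smodEq_prod hmul (s := range 5) fun n hn => ?_).trans ?_
  · rw [SModEq.sub_mem, Ideal.mem_span_singleton]
    simp only [mem_range] at hn
    exact (pow_dvd_pow _ (by omega)).trans (X_pow_dvd_one_sub_X_pow_pow_sub_one _ _)
  · rw [prod_pow, PprodList]
    refine (eulerProd_smodEq.pow 24).trans ?_
    rw [hpow]
    exact prod_range_toPowerSeries_smodEq 21 _ 24

theorem constantCoeff_Pprod : constantCoeff Pprod = 1 := by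
  rw [← coeff_zero_eq_constantCoeff_apply,
    smodEq_toPowerSeries_iff.1 Pprod_smodEq 0 (by norm_num)]
  decide +kernel

def PprodInvList : List ℤ :=
  [1, 0, 0, 0, 24, 0, 0, 0, 324, 0, 0, 0, 3200, 0, 0, 0, 25650, 0, 0, 0, 176256]

theorem Pprod_inv_smodEq :
    Pprod⁻¹ ≡ toPowerSeries PprodInvList [SMOD Ideal.span {(X : ℚ⟦X⟧) ^ 21}] := by
  refine inv_smodEq_of_mul_smodEq_one (by simp [constantCoeff_Pprod]) ?_
  have hone : toPowerSeries (truncMul 21 PprodList PprodInvList) ≡ (1 : ℚ⟦X⟧)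
      [SMOD Ideal.span {(X : ℚ⟦X⟧) ^ 21}] := by
    rw [SModEq.comm, smodEq_toPowerSeries_iff]
    intro d hd
    rw [coeff_one]
    revert d
    decide +kernel
  exact (Pprod_smodEq.mul SModEq.rfl).trans ((toPowerSeries_truncMul_smodEq 21 _ _).symm.trans hone)

theorem coeff_toLaurent (φ : ℚ⟦X⟧) (n : ℤ) :
    (toLaurent φ).coeff n = if n < 0 then 0 else coeff n.natAbs φ :=
  coeff_coe φ n

theorem Dop_toLaurent (φ : ℚ⟦X⟧) : Dop (toLaurent φ) = toLaurent (X * d⁄dX ℚ φ) := by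
  ext n
  change (n : ℚ) * (toLaurent φ).coeff n = _
  rw [coeff_toLaurent, coeff_toLaurent, coeff_X_mul_derivative]
  split_ifs with hn
  · rw [mul_zero]
  · rw [Nat.cast_natAbs, abs_of_nonneg (not_lt.1 hn)]

theorem toLaurent_inv {φ : ℚ⟦X⟧} (hφ : constantCoeff φ ≠ 0) :
    toLaurent φ⁻¹ = (toLaurent φ)⁻¹ :=
  eq_inv_of_mul_eq_one_right (by rw [← map_mul, PowerSeries.mul_inv_cancel _ hφ, map_one])

def scaledFcal : ℚ⟦X⟧ :=
  3744 * X ^ 4 * Theta -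
    (Theta * (X * d⁄dX ℚ Eseries) - 20 * Eseries * (X * d⁄dX ℚ Theta)) * Pprod⁻¹

theorem toLaurent_scaledFcal : toLaurent scaledFcal = HahnSeries.single 4 (20 : ℚ) * Fcal := by
  have : CharZero (LaurentSeries ℚ) := charZero_of_injective_ringHom HahnSeries.C_injective
  have hX : toLaurent (X ^ 4) = HahnSeries.single 4 1 := HahnSeries.ofPowerSeries_X_pow 4
  have h20 : HahnSeries.single (4 : ℤ) (20 : ℚ) = 20 * HahnSeries.single 4 1 := by
    have : (20 : LaurentSeries ℚ) = HahnSeries.C 20 := by simp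
    rw [this, HahnSeries.C_apply, HahnSeries.single_mul_single, zero_add, mul_one]
  have hPprod : constantCoeff Pprod ≠ 0 := by simp [constantCoeff_Pprod]
  have hPseries : Pseries = X ^ 4 * Pprod := rfl
  rw [Fcal, fThree, hPseries, Dop_toLaurent, Dop_toLaurent, scaledFcal, h20]
  simp only [map_mul, map_sub, map_ofNat, hX, toLaurent_inv hPprod]
  field_simp
  ring

theorem coeff_Fcal (n : ℤ) :
    Fcal.coeff n = if n + 4 < 0 then 0 else coeff (n + 4).natAbs scaledFcal / 20 := by
  have h := congrArg (HahnSeries.coeff · (n + 4)) toLaurent_scaledFcal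
  simp only [HahnSeries.coeff_single_mul_add, coeff_toLaurent] at h
  split_ifs at h ⊢ <;> linarith

def scaledFcalList : List ℤ :=
  add ((List.replicate 4 0 ++ thetaList).map (3744 * ·))
    ((mul (add (mul thetaList (euler eisensteinList))
      ((mul eisensteinList (euler thetaList)).map (-20 * ·))) PprodInvList).map (-1 * ·))

theorem scaledFcal_smodEq :
    scaledFcal ≡ toPowerSeries scaledFcalList [SMOD Ideal.span {(X : ℚ⟦X⟧) ^ 21}] := by
  have hDΘ := Theta_smodEq.X_mul_derivative
  have hDE := Eseries_smodEq.X_mul_derivative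
  rw [X_mul_derivative_toPowerSeries] at hDΘ hDE
  have hlist : (toPowerSeries scaledFcalList : ℚ⟦X⟧) = 3744 * X ^ 4 * toPowerSeries thetaList -
      (toPowerSeries thetaList * toPowerSeries (euler eisensteinList) -
        20 * toPowerSeries eisensteinList * toPowerSeries (euler thetaList)) *
        toPowerSeries PprodInvList := by
    simp only [scaledFcalList, toPowerSeries_add, toPowerSeries_mul, toPowerSeries_map_mul,
      toPowerSeries_replicate_zero_append]
    push_cast
    ring
  rw [hlist]
  exact ((SModEq.refl (3744 * X ^ 4)).mul Theta_smodEq).sub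
    (((Theta_smodEq.mul hDE).sub (((SModEq.refl 20).mul Eseries_smodEq).mul hDΘ)).mul
      Pprod_inv_smodEq)

def fcalTable : List ℤ :=
  [0, 2, 0, 0, 248, 0, 0, 0, 54000, -171990, 0, 0, 3414528, -8192000, 0, 0, 88660992, -183902292,
    0, 0, 1417878000]

theorem coeff_scaledFcal : ∀ d < 21, coeff d scaledFcal = 20 * fcalTable.getD d 0 := by
  intro d hd
  rw [smodEq_toPowerSeries_iff.1 scaledFcal_smodEq d hd]
  revert d
  decide +kernel

theorem coeff_Fcal_of_le {n : ℤ} (hn : n ≤ 16) :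
    Fcal.coeff n = if n < -4 then 0 else (fcalTable.getD (n + 4).natAbs 0 : ℚ) := by
  rw [coeff_Fcal]
  by_cases h : n < -4
  · rw [if_pos (by omega), if_pos h]
  · rw [if_neg (by omega), if_neg h, coeff_scaledFcal _ (by omega),
      mul_div_cancel_left₀ _ (by norm_num)]

/-- The Laurent series `ℱ₃ = 2 f₃ + 248 Θ` has coefficients of
`X⁻³, X⁰, X¹, X⁴, X⁵, X⁸, X⁹, X¹², X¹³, X¹⁶` equal to
`2, 248, 0, 54000, -171990, 3414528, -8192000, 88660992, -183902292, 1417878000`,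
and its coefficient of `Xⁿ` vanishes for `n < -3` and for `-3 ≤ n ≤ 16` with
`n ≡ 2, 3 (mod 4)`. -/
theorem Fcal_coefficients :
    (∀ n : ℤ, n < -3 → Fcal.coeff n = 0) ∧
    (∀ n : ℤ, -3 ≤ n → n ≤ 16 → (n % 4 = 2 ∨ n % 4 = 3) → Fcal.coeff n = 0) ∧
    Fcal.coeff (-3) = 2 ∧
    Fcal.coeff 0 = 248 ∧
    Fcal.coeff 1 = 0 ∧
    Fcal.coeff 4 = 54000 ∧
    Fcal.coeff 5 = -171990 ∧
    Fcal.coeff 8 = 3414528 ∧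
    Fcal.coeff 9 = -8192000 ∧
    Fcal.coeff 12 = 88660992 ∧
    Fcal.coeff 13 = -183902292 ∧
    Fcal.coeff 16 = 1417878000 := by
  refine ⟨fun n hn => ?_, fun n h₁ h₂ h₃ => ?_, ?_⟩
  · rw [coeff_Fcal_of_le (by omega)]
    split_ifs with h
    · rfl
    · obtain rfl : n = -4 := by omega
      simp [fcalTable]
  · rw [coeff_Fcal_of_le h₂]
    interval_cases n <;> simp_all [fcalTable]
  · simp [coeff_Fcal_of_le, fcalTable]

end
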